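/- Let Ω = (0,1)³ ∖ [½,1)³ ⊂ ℝ³ (a non-convex domain). For s ∈ (−½,½), let z_1(s) = (0,0,s), z_2(s) = (0,0,1+s) and w = (0,0). Then C_1((z_1(s),z_2(s)),w) = {x ∈ Ω : x·e₃ ≤ ½ + s}, and its Lebesgue measure is L³(C_1((z_1(s),z_2(s)),w)) = ½ + s if s ∈ (−½,0] and ½ + (3/4)s if s ∈ (0,½). In particular, the function s ↦ L³(C_1((z_1(s),z_2(s)),w)) is not differentiable at s = 0, so the Laguerre-cell volume map fails to be differentiable for non-convex domains. -/

import Mathlib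

open MeasureTheory Set Filter
open scoped ENNReal Topology RealInnerProductSpace

noncomputable section

/-- Geostrophic space: `ℝ³` with the Euclidean norm. -/
abbrev E3 : Type := EuclideanSpace ℝ (Fin 3)

/-- The matrix `J` encoding planetary rotation: `J₁₂ = -1`, `J₂₁ = 1`, all other entries `0`. -/
def matJ : Matrix (Fin 3) (Fin 3) ℝ := !![0, -1, 0; 1, 0, 0; 0, 0, 0]

/-- `J` as a (continuous) linear map on `ℝ³`. -/
def J : E3 →L[ℝ] E3 := LinearMap.toContinuousLinearMap (Matrix.toEuclideanLin matJ)

/-- The Laguerre cell `C_i(z, w)` of `Ω` generated by seeds `z` and weights `w`. -/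
def lagCell {N : ℕ} (Ω : Set E3) (z : Fin N → E3) (w : Fin N → ℝ) (i : Fin N) : Set E3 :=
  {x | x ∈ Ω ∧ ∀ j, ‖x - z i‖ ^ 2 - w i ≤ ‖x - z j‖ ^ 2 - w j}

/-- The non-convex domain `Ω = (0,1)³ \ [½,1)³`. -/
def nonConvexDomain : Set E3 :=
  {x : E3 | ∀ i, x i ∈ Ioo (0:ℝ) 1} \ {x : E3 | ∀ i, x i ∈ Ico (1/2 : ℝ) 1}

/-- The two seeds `z₁(s) = (0,0,s)` and `z₂(s) = (0,0,1+s)`. -/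
def seedsVert (s : ℝ) : Fin 2 → E3 :=
  ![EuclideanSpace.single 2 s, EuclideanSpace.single 2 (1 + s)]

/-- The volume of the first Laguerre cell of `(0,1)³ \ [½,1)³` generated by
`((0,0,s), (0,0,1+s))` with zero weights. -/
def cellVol (s : ℝ) : ℝ :=
  (volume (lagCell nonConvexDomain (seedsVert s) ![0, 0] 0)).toReal

/-!
Since the weights vanish, `x` lies in the first cell iff it is at least as close to `(0,0,s)` as
to `(0,0,1+s)`, i.e. iff `x₃ ≤ ½ + s`. The cell is then the slab `(0,1)² × (0, ½ + s]` minus its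
intersection with the removed corner `[½,1)³`, which is empty for `s ≤ 0` and the box
`[½,1)² × [½, ½ + s]` of volume `s/4` for `s > 0`. Hence the volume is `½ + s - max(s,0)/4` near
`0`, which has a kink at `s = 0` just like `|s|`.
-/

namespace EuclideanSpace

variable {ι : Type*} [Fintype ι]

theorem norm_sub_single_sq [DecidableEq ι] (x : EuclideanSpace ℝ ι) (i : ι) (a : ℝ) :
    ‖x - single i a‖ ^ 2 = ‖x‖ ^ 2 - 2 * a * x i + a ^ 2 := by
  rw [norm_sub_sq_real, inner_single_right, PiLp.norm_single]
  simp only [conj_trivial, Real.norm_eq_abs, sq_abs]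
  ring

theorem norm_sub_single_sq_le_iff [DecidableEq ι] {a b : ℝ} (hab : a < b)
    (x : EuclideanSpace ℝ ι) (i : ι) :
    ‖x - single i a‖ ^ 2 ≤ ‖x - single i b‖ ^ 2 ↔ x i ≤ (a + b) / 2 := by
  rw [norm_sub_single_sq, norm_sub_single_sq]
  constructor <;> intro h <;> nlinarith

theorem volume_setOf_forall_mem (s : ι → Set ℝ) :
    volume {x : EuclideanSpace ℝ ι | ∀ i, x i ∈ s i} = ∏ i, volume (s i) := by
  have hpre : {x : EuclideanSpace ℝ ι | ∀ i, x i ∈ s i} =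
      (MeasurableEquiv.toLp 2 (ι → ℝ)).symm ⁻¹' univ.pi s := by
    ext; simp
  rw [hpre, (volume_preserving_symm_measurableEquiv_toLp ι).measure_preimage_equiv, volume_pi_pi]

theorem volume_real_setOf_forall_mem (s : ι → Set ℝ) :
    volume.real {x : EuclideanSpace ℝ ι | ∀ i, x i ∈ s i} = ∏ i, volume.real (s i) := by
  simp only [measureReal_def, volume_setOf_forall_mem, ENNReal.toReal_prod]

end EuclideanSpace

theorem lagCell_seedsVert (s : ℝ) :
    lagCell nonConvexDomain (seedsVert s) ![0, 0] 0
      = {x : E3 | x ∈ nonConvexDomain ∧ x 2 ≤ 1/2 + s} := by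
  ext x
  have hmid : (s + (1 + s)) / 2 = 1 / 2 + s := by ring
  simp [lagCell, seedsVert, Fin.forall_fin_two,
    EuclideanSpace.norm_sub_single_sq_le_iff (show s < 1 + s by linarith), hmid]

theorem nonConvexDomain_sublevel_eq_sdiff {c : ℝ} (hc : c < 1) :
    {x : E3 | x ∈ nonConvexDomain ∧ x 2 ≤ c} =
      {x : E3 | ∀ i, x i ∈ ![Ioo 0 1, Ioo 0 1, Ioc 0 c] i} \
        {x : E3 | ∀ i, (1/2 : ℝ) ≤ x i} := by
  ext x
  simp only [nonConvexDomain, Set.mem_sdiff, mem_ofPred_eq, Fin.forall_fin_succ,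
    IsEmpty.forall_iff, and_true, Matrix.cons_val_zero, Matrix.cons_val_succ,
    Matrix.cons_val_fin_one]
  grind

theorem sublevelBox_inter_corner (c : ℝ) :
    {x : E3 | ∀ i, x i ∈ ![Ioo 0 1, Ioo 0 1, Ioc 0 c] i} ∩
        {x : E3 | ∀ i, (1/2 : ℝ) ≤ x i} =
      {x : E3 | ∀ i, x i ∈ ![Ico (1/2) 1, Ico (1/2) 1, Icc (1/2) c] i} := by
  ext x
  simp only [mem_inter_iff, mem_ofPred_eq, Fin.forall_fin_succ, IsEmpty.forall_iff, and_true,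
    Matrix.cons_val_zero, Matrix.cons_val_succ, Matrix.cons_val_fin_one]
  grind

theorem volume_real_nonConvexDomain_sublevel {c : ℝ} (h0 : 0 ≤ c) (h1 : c < 1) :
    volume.real {x : E3 | x ∈ nonConvexDomain ∧ x 2 ≤ c} = c - max (c - 1/2) 0 / 4 := by
  have hbox : volume {x : E3 | ∀ i, x i ∈ ![Ioo 0 1, Ioo 0 1, Ioc 0 c] i} ≠ ⊤ := by
    simp [EuclideanSpace.volume_setOf_forall_mem, Fin.prod_univ_three]
  have hcorner : MeasurableSet {x : E3 | ∀ i, (1/2 : ℝ) ≤ x i} := by measurability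
  rw [nonConvexDomain_sublevel_eq_sdiff h1]
  have hsplit := measureReal_sdiff_add_inter hcorner hbox
  rw [sublevelBox_inter_corner, EuclideanSpace.volume_real_setOf_forall_mem,
    EuclideanSpace.volume_real_setOf_forall_mem] at hsplit
  simp only [Fin.prod_univ_three, Matrix.cons_val_zero, Matrix.cons_val_one, Matrix.cons_val,
    Real.volume_real_Ioo, Real.volume_real_Ioc, Real.volume_real_Ico, Real.volume_real_Icc,
    sub_zero, max_eq_left h0] at hsplit
  norm_num at hsplit
  linarith

theorem cellVol_eq {s : ℝ} (hs : s ∈ Ioo (-(1/2) : ℝ) (1/2)) :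
    cellVol s = 1/2 + s - max s 0 / 4 := by
  rw [cellVol, ← measureReal_def, lagCell_seedsVert,
    volume_real_nonConvexDomain_sublevel (by linarith [hs.1]) (by linarith [hs.2])]
  ring_nf

theorem not_differentiableAt_max_zero : ¬ DifferentiableAt ℝ (fun t : ℝ => max t 0) 0 := by
  intro h
  have habs : (abs : ℝ → ℝ) = fun t => 2 * max t 0 - t := by
    ext t
    rcases le_total t 0 with ht | ht
    · rw [abs_of_nonpos ht, max_eq_right ht]; ring
    · rw [abs_of_nonneg ht, max_eq_left ht]; ring
  exact not_differentiableAt_abs_zero (habs ▸ (h.const_mul 2).sub differentiableAt_id)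

/-- **Failure of differentiability of the Laguerre-cell volume map on non-convex domains**
(Remark 4.14, Counterexample 2, of Bourne, Egan, Pelloni, Wilkinson). -/
theorem laguerre_volume_not_differentiable_nonconvex :
    (∀ s ∈ Ioo (-(1/2) : ℝ) (1/2),
      lagCell nonConvexDomain (seedsVert s) ![0, 0] 0
        = {x : E3 | x ∈ nonConvexDomain ∧ x 2 ≤ 1/2 + s}) ∧
    (∀ s ∈ Ioc (-(1/2) : ℝ) 0, cellVol s = 1/2 + s) ∧
    (∀ s ∈ Ioo (0 : ℝ) (1/2), cellVol s = 1/2 + (3/4) * s) ∧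
    ¬ DifferentiableAt ℝ cellVol 0 := by
  refine ⟨fun s _ => lagCell_seedsVert s, fun s hs => ?_, fun s hs => ?_, fun hdiff => ?_⟩
  · rw [cellVol_eq ⟨hs.1, by linarith [hs.2]⟩, max_eq_right hs.2]
    ring
  · rw [cellVol_eq ⟨by linarith [hs.1], hs.2⟩, max_eq_left hs.1.le]
    ring
  · have hkink : (fun t : ℝ => max t 0) =ᶠ[𝓝 0] fun t => 4 * (1/2 + t - cellVol t) := by
      filter_upwards [Ioo_mem_nhds (by norm_num : -(1/2 : ℝ) < 0) (by norm_num : (0 : ℝ) < 1/2)]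
        with t ht
      rw [cellVol_eq ht]
      ring
    exact not_differentiableAt_max_zero <| hkink.differentiableAt_iff.mpr <|
      (((differentiableAt_const _).add differentiableAt_id).sub hdiff).const_mul 4
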